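/- arXiv:2312.01394 — 3 statements merged into one kernel-verified Lean document; each statement's English description precedes it below -/
import Mathlib

section
/- Coalitional decomposition of mixed deviations: for edge sets F, G with F ∩ G = ∅, if for some set N' of players u_i((E ∪ F) \ G) ≥ u_i(E) for all i ∈ N' with strict inequality for at least one i ∈ N', then either u_i(E ∪ F) ≥ u_i(E) for all i ∈ N' with strict inequality for some i ∈ N', or there exists i ∈ N' with u_i(E \ G) > u_i(E). -/
open Finset

variable {V : Type*} [Fintype V] [DecidableEq V]

/-- The neighbourhood of `i` in the edge set `E`. -/
def nbhd (E : Finset (Sym2 V)) (i : V) : Finset V :=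
  Finset.univ.filter fun j => j ≠ i ∧ s(i, j) ∈ E

/-- The degree of `v` in the edge set `E`. -/
def deg (E : Finset (Sym2 V)) (v : V) : ℕ :=
  (nbhd E v).card

/-- The utility of player `i` with visibility-aversion `α i` on edge set `E`:
the sum of the degrees of `i`'s neighbours minus `α i` times `i`'s own degree. -/
noncomputable def util (α : V → ℝ) (E : Finset (Sym2 V)) (i : V) : ℝ :=
  (∑ j ∈ nbhd E i, (deg E j : ℝ)) - α i * (deg E i : ℝ)

lemma nbhd_union (X Y : Finset (Sym2 V)) (i : V) :
    nbhd (X ∪ Y) i = nbhd X i ∪ nbhd Y i := by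
  ext j; simp [nbhd]; tauto

lemma nbhd_disjoint {X Y : Finset (Sym2 V)} (h : X ∩ Y = ∅) (i : V) :
    Disjoint (nbhd X i) (nbhd Y i) := by
  rw [Finset.disjoint_left]
  intro j hj hj'
  simp only [nbhd, Finset.mem_filter] at hj hj'
  have : s(i, j) ∈ X ∩ Y := Finset.mem_inter.2 ⟨hj.2.2, hj'.2.2⟩
  simp [h] at this

lemma deg_union {X Y : Finset (Sym2 V)} (h : X ∩ Y = ∅) (i : V) :
    deg (X ∪ Y) i = deg X i + deg Y i := by
  rw [deg, nbhd_union, Finset.card_union_of_disjoint (nbhd_disjoint h i)]; rfl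

lemma util_union_sub (α : V → ℝ) (X G : Finset (Sym2 V)) (h : X ∩ G = ∅) (i : V) :
    util α (X ∪ G) i - util α X i =
      (∑ j ∈ nbhd X i, (deg G j : ℝ)) +
        (∑ j ∈ nbhd G i, ((deg X j : ℝ) + (deg G j : ℝ))) - α i * (deg G i : ℝ) := by
  unfold util
  rw [nbhd_union, Finset.sum_union (nbhd_disjoint h i), deg_union h i]
  simp only [deg_union h]
  push_cast
  rw [Finset.sum_add_distrib]
  ring

lemma key (α : V → ℝ) (X F G : Finset (Sym2 V)) (hXF : X ∩ F = ∅) (hXG : X ∩ G = ∅)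
    (hFG : F ∩ G = ∅) (i : V) :
    util α (X ∪ G) i - util α X i ≤ util α (X ∪ F ∪ G) i - util α (X ∪ F) i := by
  have hXFG : (X ∪ F) ∩ G = ∅ := by
    rw [Finset.union_inter_distrib_right, hXG, hFG, Finset.union_empty]
  rw [util_union_sub α X G hXG i, util_union_sub α (X ∪ F) G hXFG i]
  have h1 : (∑ j ∈ nbhd X i, (deg G j : ℝ)) ≤ ∑ j ∈ nbhd (X ∪ F) i, (deg G j : ℝ) := by
    apply Finset.sum_le_sum_of_subset_of_nonneg
    · rw [nbhd_union]; exact Finset.subset_union_left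
    · intros; positivity
  have h2 : (∑ j ∈ nbhd G i, ((deg X j : ℝ) + (deg G j : ℝ))) ≤
      ∑ j ∈ nbhd G i, ((deg (X ∪ F) j : ℝ) + (deg G j : ℝ)) := by
    apply Finset.sum_le_sum
    intro j _
    have := deg_union hXF j
    have : (deg X j : ℝ) ≤ (deg (X ∪ F) j : ℝ) := by
      rw [deg_union hXF j]; push_cast; linarith [Nat.cast_nonneg (α := ℝ) (deg F j)]
    linarith
  linarith

/-- Coalitional decomposition of mixed deviations into a pure addition improving the
coalition, or a pure deletion strictly improving some member. -/
theorem coalition_mixed_decomposition (N : Finset V) (α : V → ℝ)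
    (hα : ∀ i ∈ N, 0 ≤ α i) (N' : Finset V) (hN' : N' ⊆ N)
    (E F G : Finset (Sym2 V)) (hGE : G ⊆ E) (hdisj : F ∩ (E ∪ G) = ∅)
    (hweak : ∀ i ∈ N', util α E i ≤ util α ((E ∪ F) \ G) i)
    (hstrict : ∃ i ∈ N', util α E i < util α ((E ∪ F) \ G) i) :
    ((∀ i ∈ N', util α E i ≤ util α (E ∪ F) i) ∧
      ∃ i ∈ N', util α E i < util α (E ∪ F) i) ∨
    ∃ i ∈ N', util α E i < util α (E \ G) i := by
  by_cases hdel : ∃ i ∈ N', util α E i < util α (E \ G) i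
  · exact Or.inr hdel
  · left
    push_neg at hdel
    have hFE : F ∩ E = ∅ := by
      apply Finset.eq_empty_of_forall_notMem
      intro e he
      rw [Finset.mem_inter] at he
      have : e ∈ F ∩ (E ∪ G) := by
        rw [Finset.mem_inter, Finset.mem_union]; exact ⟨he.1, Or.inl he.2⟩
      simp [hdisj] at this
    have hFG : F ∩ G = ∅ := by
      apply Finset.eq_empty_of_forall_notMem
      intro e he
      rw [Finset.mem_inter] at he
      have : e ∈ F ∩ (E ∪ G) := by
        rw [Finset.mem_inter, Finset.mem_union]; exact ⟨he.1, Or.inr he.2⟩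
      simp [hdisj] at this
    have hXF : (E \ G) ∩ F = ∅ := by
      apply Finset.eq_empty_of_forall_notMem
      intro e he
      rw [Finset.mem_inter, Finset.mem_sdiff] at he
      have : e ∈ F ∩ E := Finset.mem_inter.2 ⟨he.2, he.1.1⟩
      simp [hFE] at this
    have hXG : (E \ G) ∩ G = ∅ := by
      apply Finset.eq_empty_of_forall_notMem
      intro e he
      rw [Finset.mem_inter, Finset.mem_sdiff] at he
      exact he.1.2 he.2
    have hE : E \ G ∪ G = E := Finset.sdiff_union_of_subset hGE
    have hEFG : E \ G ∪ F ∪ G = E ∪ F := by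
      rw [Finset.union_right_comm, hE]
    have hEF : E \ G ∪ F = (E ∪ F) \ G := by
      ext e
      simp only [Finset.mem_union, Finset.mem_sdiff]
      constructor
      · rintro (⟨h1, h2⟩ | h1)
        · exact ⟨Or.inl h1, h2⟩
        · refine ⟨Or.inr h1, fun hG => ?_⟩
          have : e ∈ F ∩ G := Finset.mem_inter.2 ⟨h1, hG⟩
          simp [hFG] at this
      · rintro ⟨h1 | h1, h2⟩
        · exact Or.inl ⟨h1, h2⟩
        · exact Or.inr h1
    have hmain : ∀ i, util α ((E ∪ F) \ G) i - util α (E \ G) i ≤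
        util α (E ∪ F) i - util α E i := by
      intro i
      have := key α (E \ G) F G hXF hXG hFG i
      rw [hE, hEFG, hEF] at this
      linarith
    constructor
    · intro i hi
      have := hmain i
      have := hweak i hi
      have := hdel i hi
      linarith
    · obtain ⟨i, hi, hlt⟩ := hstrict
      refine ⟨i, hi, ?_⟩
      have := hmain i
      have := hdel i hi
      linarith
end

section
/- If a coalition of players can weakly improve all its members by a joint deletion of edges (with at least one strict improvement), then some single player in the coalition can strictly improve her own utility by unilaterally deleting a subset of her own incident edges. Formally: if S ⊆ N and F ⊆ ∪_{i∈S}({i} × Nbhd_E(i)) satisfy u_i(E \ F) ≥ u_i(E) for all i ∈ S and u_i(E \ F) > u_i(E) for some i ∈ S, then there exists a player i ∈ S and a set H of edges incident to i with u_i(E \ H) > u_i(E). -/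
open Finset

variable {V : Type*} [Fintype V] [DecidableEq V]

lemma nbhd_mono {A B : Finset (Sym2 V)} (h : A ⊆ B) (i : V) : nbhd A i ⊆ nbhd B i := by
  intro j hj
  simp only [nbhd, Finset.mem_filter, Finset.mem_univ, true_and] at hj ⊢
  exact ⟨hj.1, h hj.2⟩

lemma nbhd_eq_of {A B : Finset (Sym2 V)} (h : A ⊆ B) (i : V)
    (h2 : ∀ e ∈ B, e ∉ A → i ∉ e) : nbhd A i = nbhd B i := by
  refine Finset.Subset.antisymm (nbhd_mono h i) ?_
  intro j hj
  simp only [nbhd, Finset.mem_filter, Finset.mem_univ, true_and] at hj ⊢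
  refine ⟨hj.1, ?_⟩
  by_contra hA
  exact h2 _ hj.2 hA (Sym2.mem_mk_left i j)

/-- If a coalition profits (all weakly, one strictly) from a joint deletion, some single
member strictly profits from unilaterally deleting a set of her incident edges. -/
theorem coalition_deletion_to_unilateral (N : Finset V) (α : V → ℝ)
    (hα : ∀ i ∈ N, 0 ≤ α i) (S : Finset V) (hS : S ⊆ N)
    (E F : Finset (Sym2 V)) (hF : ∀ e ∈ F, e ∈ E ∧ ∃ i ∈ S, i ∈ e)
    (hweak : ∀ i ∈ S, util α E i ≤ util α (E \ F) i)
    (hstrict : ∃ i ∈ S, util α E i < util α (E \ F) i) :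
    ∃ i ∈ S, ∃ H : Finset (Sym2 V), (∀ e ∈ H, i ∈ e) ∧
      util α E i < util α (E \ H) i := by
  obtain ⟨i, hiS, hi⟩ := hstrict
  classical
  refine ⟨i, hiS, F.filter (fun e => i ∈ e), fun e he => (Finset.mem_filter.mp he).2, ?_⟩
  set H := F.filter (fun e => i ∈ e) with hH
  have hsub : E \ F ⊆ E \ H :=
    Finset.sdiff_subset_sdiff (Finset.Subset.refl E) (Finset.filter_subset _ _)
  have hnb : nbhd (E \ F) i = nbhd (E \ H) i := by
    refine nbhd_eq_of hsub i ?_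
    intro e he hne hie
    rw [Finset.mem_sdiff] at he hne
    push_neg at hne
    have heF : e ∈ F := hne he.1
    exact he.2 (Finset.mem_filter.mpr ⟨heF, hie⟩)
  have hdegi : deg (E \ F) i = deg (E \ H) i := by rw [deg, deg, hnb]
  have hle : util α (E \ F) i ≤ util α (E \ H) i := by
    unfold util
    rw [hnb, hdegi]
    apply sub_le_sub_right
    apply Finset.sum_le_sum
    intro j _
    exact_mod_cast Finset.card_le_card (nbhd_mono hsub j)
  exact lt_of_lt_of_le hi hle
end

section
/- In any Nash equilibrium graph with all α_i equal to a common α, any non-player adjacent to some player is adjacent to every player: if i ∈ N, j ∉ N and (i, j) ∈ E, then (k, j) ∈ E for every player k ∈ N. -/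
open Finset

variable {V : Type*} [Fintype V] [DecidableEq V]

/-- All unordered pairs of distinct vertices within `C`. -/
def cliqueOn (C : Finset V) : Finset (Sym2 V) :=
  ((C ×ˢ C).filter fun p => p.1 ≠ p.2).image fun p => s(p.1, p.2)

/-- A deviation of the edge set that the coalition `P` of players (among the player
set `N`) can achieve on its own: each added edge is either between two coalition
members (mutual consent), or unilaterally from a coalition member to a non-player,
or between two non-player neighbours of a coalition member; each removed edge is
incident to a coalition member, or is an edge between two non-player neighbours of
a coalition member (a connection that the member sustained). -/
def CoalDev (N P : Finset V) (E E' : Finset (Sym2 V)) : Prop :=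
  (∀ e ∈ E' \ E,
      (∃ i ∈ P, ∃ j ∈ P, i ≠ j ∧ e = s(i, j)) ∨
      (∃ i ∈ P, ∃ j, j ∉ N ∧ j ≠ i ∧ e = s(i, j)) ∨
      (∃ i ∈ P, ∃ j k : V, j ∉ N ∧ k ∉ N ∧ j ≠ k ∧
        s(i, j) ∈ E' ∧ s(i, k) ∈ E' ∧ e = s(j, k))) ∧
  (∀ e ∈ E \ E',
      (∃ i ∈ P, i ∈ e) ∨
      (∃ i ∈ P, ∃ j k : V, j ∉ N ∧ k ∉ N ∧ j ≠ k ∧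
        s(i, j) ∈ E ∧ s(i, k) ∈ E ∧ e = s(j, k)))

/-- Nash stability: no single player has a strictly profitable unilateral deviation. -/
def NashStable (N : Finset V) (α : V → ℝ) (E : Finset (Sym2 V)) : Prop :=
  ∀ i ∈ N, ∀ E' : Finset (Sym2 V), CoalDev N {i} E E' → util α E' i ≤ util α E i

/-- Pairwise stability: any two unconnected players such that connecting would strictly
benefit one must have the other strictly losing from the connection. -/
def PairStable (N : Finset V) (α : V → ℝ) (E : Finset (Sym2 V)) : Prop :=
  ∀ i ∈ N, ∀ j ∈ N, i ≠ j → s(i, j) ∉ E →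
    util α E i < util α (E ∪ {s(i, j)}) i → util α (E ∪ {s(i, j)}) j < util α E j

/-- Pairwise Nash stability. -/
def PANS (N : Finset V) (α : V → ℝ) (E : Finset (Sym2 V)) : Prop :=
  NashStable N α E ∧ PairStable N α E

/-- Strength: no coalition of players has a deviation making all its members weakly
better off and at least one strictly better off. -/
def Strong (N : Finset V) (α : V → ℝ) (E : Finset (Sym2 V)) : Prop :=
  ∀ P ⊆ N, ∀ E' : Finset (Sym2 V), CoalDev N P E E' →
    ¬ ((∀ i ∈ P, util α E i ≤ util α E' i) ∧ ∃ i ∈ P, util α E i < util α E' i)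

/-- Social welfare: the total utility of the players. -/
noncomputable def sw (N : Finset V) (α : V → ℝ) (E : Finset (Sym2 V)) : ℝ :=
  ∑ i ∈ N, util α E i

lemma mem_nbhd {E : Finset (Sym2 V)} {v w : V} :
    w ∈ nbhd E v ↔ w ≠ v ∧ s(v, w) ∈ E := by simp [nbhd]

lemma nbhd_erase_self {E : Finset (Sym2 V)} {i j : V} (h : i ≠ j) :
    nbhd (E.erase s(i, j)) i = (nbhd E i).erase j := by
  ext w
  simp only [mem_nbhd, Finset.mem_erase, Sym2.eq_iff]
  aesop

lemma nbhd_erase_other {E : Finset (Sym2 V)} {i j v : V} (hvi : v ≠ i) (hvj : v ≠ j) :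
    nbhd (E.erase s(i, j)) v = nbhd E v := by
  ext w
  simp only [mem_nbhd, Finset.mem_erase, Sym2.eq_iff]
  aesop

lemma nbhd_insert_self {E : Finset (Sym2 V)} {k j : V} (h : k ≠ j) :
    nbhd (insert s(k, j) E) k = insert j (nbhd E k) := by
  ext w
  simp only [mem_nbhd, Finset.mem_insert, Sym2.eq_iff]
  aesop

lemma nbhd_insert_other {E : Finset (Sym2 V)} {k j v : V} (hvk : v ≠ k) (hvj : v ≠ j) :
    nbhd (insert s(k, j) E) v = nbhd E v := by
  ext w
  simp only [mem_nbhd, Finset.mem_insert, Sym2.eq_iff]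
  aesop

lemma util_erase (a : ℝ) {E : Finset (Sym2 V)} {i j : V} (hij : i ≠ j)
    (hmem : s(i, j) ∈ E) :
    util (fun _ => a) (E.erase s(i, j)) i
      = util (fun _ => a) E i - (deg E j : ℝ) + a := by
  have hjmem : j ∈ nbhd E i := mem_nbhd.mpr ⟨hij.symm, hmem⟩
  have hdeg : ∀ l ∈ (nbhd E i).erase j,
      ((deg (E.erase s(i, j)) l : ℝ)) = (deg E l : ℝ) := by
    intro l hl
    rw [Finset.mem_erase, mem_nbhd] at hl
    unfold deg
    rw [nbhd_erase_other hl.2.1 hl.1]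
  have hcard : (1 : ℕ) ≤ (nbhd E i).card := Finset.card_pos.mpr ⟨j, hjmem⟩
  unfold util
  rw [nbhd_erase_self hij, Finset.sum_congr rfl hdeg,
    Finset.sum_erase_eq_sub hjmem]
  show _ - a * ((deg (E.erase s(i, j)) i : ℕ) : ℝ) = _
  unfold deg
  rw [nbhd_erase_self hij, Finset.card_erase_of_mem hjmem, Nat.cast_sub hcard]
  push_cast
  ring

lemma util_insert (a : ℝ) {E : Finset (Sym2 V)} {k j : V} (hkj : k ≠ j)
    (hmem : s(k, j) ∉ E) :
    util (fun _ => a) (insert s(k, j) E) k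
      = util (fun _ => a) E k + (deg E j : ℝ) + 1 - a := by
  have hjn : j ∉ nbhd E k := fun h => hmem (mem_nbhd.mp h).2
  have hkn : k ∉ nbhd E j := by
    intro h
    have h2 := (mem_nbhd.mp h).2
    rw [Sym2.eq_swap] at h2
    exact hmem h2
  have hdeg : ∀ l ∈ nbhd E k,
      ((deg (insert s(k, j) E) l : ℝ)) = (deg E l : ℝ) := by
    intro l hl
    have hl' := mem_nbhd.mp hl
    have hlj : l ≠ j := fun h => hjn (h ▸ hl)
    unfold deg
    rw [nbhd_insert_other hl'.1 hlj]
  have hdegj : (deg (insert s(k, j) E) j : ℝ) = (deg E j : ℝ) + 1 := by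
    unfold deg
    rw [show s(k, j) = s(j, k) from Sym2.eq_swap, nbhd_insert_self hkj.symm,
      Finset.card_insert_of_notMem hkn]
    push_cast; ring
  unfold util
  rw [nbhd_insert_self hkj, Finset.sum_insert hjn, hdegj,
    Finset.sum_congr rfl hdeg]
  show _ - a * ((deg (insert s(k, j) E) k : ℕ) : ℝ) = _
  unfold deg
  rw [nbhd_insert_self hkj, Finset.card_insert_of_notMem hjn]
  push_cast
  ring

/-- In a pairwise Nash equilibrium graph with a common `α`, any non-player adjacent to
some player is adjacent to every player. -/
theorem nonplayer_adjacent_to_all_players (N : Finset V) (hN : 2 ≤ N.card)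
    (a : ℝ) (ha : 0 ≤ a) (E : Finset (Sym2 V))
    (hE : E ⊆ cliqueOn (Finset.univ : Finset V))
    (hPANS : PANS N (fun _ => a) E)
    (i : V) (hi : i ∈ N) (j : V) (hj : j ∉ N) (hij : s(i, j) ∈ E) :
    ∀ k ∈ N, s(k, j) ∈ E := by
  intro k hk
  by_contra hkjE
  have hij' : i ≠ j := fun h => hj (h ▸ hi)
  have hkj' : k ≠ j := fun h => hj (h ▸ hk)
  obtain ⟨hNash, _⟩ := hPANS
  -- Step 1: player i may not profit from deleting the edge s(i,j).
  have hdev1 : CoalDev N {i} E (E.erase s(i, j)) := by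
    constructor
    · intro e he
      rw [Finset.mem_sdiff] at he
      exact absurd (Finset.mem_of_mem_erase he.1) he.2
    · intro e he
      rw [Finset.mem_sdiff] at he
      have heq : e = s(i, j) := by
        by_contra hne
        exact he.2 (Finset.mem_erase.mpr ⟨hne, he.1⟩)
      exact Or.inl ⟨i, Finset.mem_singleton_self i, heq ▸ Sym2.mem_mk_left i j⟩
  have h1 := hNash i hi _ hdev1
  rw [util_erase a hij' hij] at h1
  -- Step 2: player k may not profit from adding the edge s(k,j).
  have hdev2 : CoalDev N {k} E (insert s(k, j) E) := by
    constructor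
    · intro e he
      rw [Finset.mem_sdiff, Finset.mem_insert] at he
      have heq : e = s(k, j) := he.1.resolve_right fun h => he.2 h
      exact Or.inr (Or.inl ⟨k, Finset.mem_singleton_self k, j, hj, hkj'.symm, heq⟩)
    · intro e he
      rw [Finset.mem_sdiff] at he
      exact absurd (Finset.mem_insert_of_mem he.1) he.2
  have h2 := hNash k hk _ hdev2
  rw [util_insert a hkj' hkjE] at h2
  linarith
end
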